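/- (Upper bound of Proposition 1, non-interacting form.) Let d ≥ 1, let Λ ⊆ ℤ^d be finite, and let V^↑, V^↓ : Λ → [0,∞) be a magnetic potential with A_↑ ∩ A_↓ = ∅, A_↑ and A_↓ nonempty, and V₀ > 2d(√d + 1). Let N_↑, N_↓ be integers with 0 ≤ N_σ ≤ |A_σ| and set ρ_σ = N_σ/|A_σ|. Then S_{N↑}(h_{V^↑}) + S_{N↓}(h_{V^↓}) ≤ Σ_{σ ∈ {↑,↓}} [ e(ρ_σ)·|A_σ| − (e(ρ_σ)/(2d))·B(A_σ) ]. -/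

import Mathlib

/-!
Trial state: let `D = {k ∈ [-π,π]^d : ε(k) < E}` with `(2π)^{-d}|D| = ρ`, and let `γ` be the
Fourier projection onto `D` compressed to `A`, `γ_{xy} = (2π)^{-d} ∫_D cos(k·(x-y)) dk` for
`x, y ∈ A`. Bessel's inequality for the plane waves on `A` gives `0 ≤ γ ≤ 1`, and `tr γ = ρ|A| = N`,
so Ky Fan's principle gives `S_N(h_V) ≤ tr(γ h_V)`. As `V` vanishes on `A`, only the hopping
between neighbouring sites of `A` contributes to `tr(γ h_V)`, and by the coordinate symmetry of `D`
each of the `2d|A| - B(A)` ordered bonds contributes `-γ_{x,x±e_j} = e(ρ)/(2d)`. The densities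
`ρ = 0` and `ρ = 1` are the cases `D = ∅` and `D = [-π,π]^d`.
-/

open MeasureTheory
open scoped Classical

/-- The tight-binding dispersion relation `ε(k) = -2 Σᵢ cos kᵢ`. -/
noncomputable def eps (d : ℕ) (k : Fin d → ℝ) : ℝ := -2 * ∑ i, Real.cos (k i)

/-- `R(E) = (2π)^{-d} λ({k ∈ [-π,π]^d : ε(k) < E})`. -/
noncomputable def Rfun (d : ℕ) (E : ℝ) : ℝ :=
  (volume {k : Fin d → ℝ | (∀ i, k i ∈ Set.Icc (-Real.pi) Real.pi) ∧ eps d k < E}).toReal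
    / (2 * Real.pi) ^ d

/-- `(2π)^{-d} ∫_{k ∈ [-π,π]^d, ε(k) < E} ε(k) dk`. -/
noncomputable def en (d : ℕ) (E : ℝ) : ℝ :=
  (∫ k in {k : Fin d → ℝ | (∀ i, k i ∈ Set.Icc (-Real.pi) Real.pi) ∧ eps d k < E},
    eps d k) / (2 * Real.pi) ^ d

/-- The `ℓ¹` distance `|x - y|₁ = Σᵢ |xᵢ - yᵢ|` on `ℤ^d`. -/
def dist1 {d : ℕ} (x y : Fin d → ℤ) : ℕ := ∑ i, (x i - y i).natAbs

/-- The boundary `B(A)`: the number of pairs `(x, y)` with `x ∈ A`, `y ∉ A`,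
`|x - y|₁ = 1`. -/
noncomputable def bdry {d : ℕ} (A : Set (Fin d → ℤ)) : ℕ :=
  Set.ncard {p : (Fin d → ℤ) × (Fin d → ℤ) | p.1 ∈ A ∧ p.2 ∉ A ∧ dist1 p.1 p.2 = 1}

/-- The sum of the `N` smallest eigenvalues (with multiplicity) of a real
symmetric matrix. -/
noncomputable def sumSmallest {n : Type*} [Fintype n] [DecidableEq n]
    (M : Matrix n n ℝ) (N : ℕ) : ℝ :=
  if h : M.IsHermitian then
    sInf ((fun s : Finset n => ∑ i ∈ s, h.eigenvalues i) '' {s : Finset n | s.card = N})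
  else 0

/-- The one-particle tight-binding Hamiltonian `h_V` on `Λ`:
`(h_V)_{xy} = -1` if `|x-y|₁ = 1`, `(h_V)_{xx} = V(x)`, and `0` otherwise. -/
noncomputable def hV (d : ℕ) (Λ : Finset (Fin d → ℤ)) (V : (Fin d → ℤ) → ℝ) :
    Matrix Λ Λ ℝ :=
  fun x y => if dist1 (x : Fin d → ℤ) (y : Fin d → ℤ) = 1 then -1
    else if (x : Fin d → ℤ) = (y : Fin d → ℤ) then V x else 0

/-- `S_N(h_V)`: the sum of the `N` smallest eigenvalues of `h_V`. -/
noncomputable def SN (d : ℕ) (Λ : Finset (Fin d → ℤ)) (V : (Fin d → ℤ) → ℝ) (N : ℕ) : ℝ :=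
  sumSmallest (hV d Λ V) N

/-- `A_σ = {x ∈ Λ : V^σ(x) = 0}`. -/
noncomputable def Aset (d : ℕ) (Λ : Finset (Fin d → ℤ)) (V : (Fin d → ℤ) → ℝ) :
    Finset (Fin d → ℤ) :=
  Λ.filter (fun x => V x = 0)

/-- `γ(V₀) = 4d/(V₀-2d) + 16d³/((V₀-2d)² - 4d³)`. -/
noncomputable def gam (d : ℕ) (V0 : ℝ) : ℝ :=
  4*(d:ℝ)/(V0 - 2*d) + 16*(d:ℝ)^3/((V0 - 2*d)^2 - 4*(d:ℝ)^3)


open Matrix Finset Real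

section Bathtub

variable {ι : Type*} [Fintype ι]

theorem exists_card_eq_forall_le_forall_ge (f : ι → ℝ) {N : ℕ} (hN : N ≤ Fintype.card ι) :
    ∃ (s : Finset ι) (t : ℝ), s.card = N ∧ (∀ i ∈ s, f i ≤ t) ∧ ∀ i ∉ s, t ≤ f i := by
  obtain ⟨s, hs, hmin⟩ := (univ.powersetCard N).exists_min_image (fun s => ∑ i ∈ s, f i)
    (powersetCard_nonempty.mpr (by simpa using hN))
  rw [mem_powersetCard_univ] at hs
  have exchange : ∀ i ∈ s, ∀ j ∉ s, f i ≤ f j := by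
    intro i hi j hj
    have hj' : j ∉ s.erase i := fun h => hj (mem_of_mem_erase h)
    have := hmin (insert j (s.erase i)) (by
      rw [mem_powersetCard_univ, card_insert_of_notMem hj', card_erase_of_mem hi, ← hs]
      exact Nat.sub_add_cancel (card_pos.mpr ⟨i, hi⟩))
    rw [sum_insert hj', sum_erase_eq_sub hi] at this
    linarith
  rcases s.eq_empty_or_nonempty with rfl | hne
  · exact ⟨∅, -∑ i, |f i|, hs, by simp, fun j _ => by
      linarith [single_le_sum (fun i _ => abs_nonneg (f i)) (mem_univ j), neg_abs_le (f j)]⟩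
  · obtain ⟨i₀, hi₀, hmax⟩ := s.exists_max_image f hne
    exact ⟨s, f i₀, hs, hmax, exchange i₀ hi₀⟩

/-- The bathtub principle. -/
theorem exists_card_eq_sum_le_sum_mul (f c : ι → ℝ) (hc0 : ∀ i, 0 ≤ c i) (hc1 : ∀ i, c i ≤ 1)
    {N : ℕ} (hsum : ∑ i, c i = N) :
    ∃ s : Finset ι, s.card = N ∧ ∑ i ∈ s, f i ≤ ∑ i, f i * c i := by
  have hN : N ≤ Fintype.card ι := by
    have : (N : ℝ) ≤ Fintype.card ι := by
      simpa [← hsum] using sum_le_sum fun i (_ : i ∈ univ) => hc1 i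
    exact_mod_cast this
  obtain ⟨s, t, hs, hle, hge⟩ := exists_card_eq_forall_le_forall_ge f hN
  refine ⟨s, hs, ?_⟩
  -- split `∑ f c - ∑_s f` into terms that are nonnegative by the choice of the threshold `t`
  have key : ∑ i, f i * c i - ∑ i ∈ s, f i = ∑ i ∈ s, (f i - t) * (c i - 1)
      + ∑ i ∈ sᶜ, (f i - t) * c i + t * (∑ i, c i - s.card) := by
    rw [← sum_add_sum_compl s (fun i => f i * c i), ← sum_add_sum_compl s c]
    simp only [sub_mul, mul_sub, sum_sub_distrib, ← mul_sum, sum_const, nsmul_eq_mul, mul_one]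
    ring
  have h1 : 0 ≤ ∑ i ∈ s, (f i - t) * (c i - 1) :=
    sum_nonneg fun i hi => mul_nonneg_of_nonpos_of_nonpos (by linarith [hle i hi])
      (by linarith [hc1 i])
  have h2 : 0 ≤ ∑ i ∈ sᶜ, (f i - t) * c i :=
    sum_nonneg fun i hi => mul_nonneg (by linarith [hge i (mem_compl.mp hi)]) (hc0 i)
  rw [hsum, hs, sub_self, mul_zero, add_zero] at key
  linarith

end Bathtub

section Variational

variable {n : Type*} [Fintype n] [DecidableEq n]

theorem Matrix.IsHermitian.trace_eq_sum_eigenvectorBasis {M : Matrix n n ℝ} (hM : M.IsHermitian)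
    (X : Matrix n n ℝ) :
    X.trace = ∑ i, ⇑(hM.eigenvectorBasis i) ⬝ᵥ X *ᵥ ⇑(hM.eigenvectorBasis i) := by
  set U : Matrix n n ℝ := (hM.eigenvectorUnitary : Matrix n n ℝ)
  have hU : U * star U = 1 := Unitary.coe_mul_star_self _
  calc X.trace = (star U * X * U).trace := by rw [trace_mul_cycle, hU, one_mul]
    _ = _ := by
      refine sum_congr rfl fun i _ => ?_
      rw [diag_apply, Matrix.mul_assoc, Matrix.mul_apply, dotProduct]
      simp only [U, Matrix.mul_apply, star_apply, eigenvectorUnitary_apply, star_trivial, mulVec,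
        dotProduct]

/-- Ky Fan's variational principle. -/
theorem sumSmallest_le_trace_mul {M : Matrix n n ℝ} (hM : M.IsHermitian) (γ : Matrix n n ℝ)
    (hγ0 : ∀ v, 0 ≤ v ⬝ᵥ γ *ᵥ v) (hγ1 : ∀ v, v ⬝ᵥ γ *ᵥ v ≤ v ⬝ᵥ v) {N : ℕ} (hN : γ.trace = N) :
    sumSmallest M N ≤ (γ * M).trace := by
  set w := fun i => ⇑(hM.eigenvectorBasis i)
  have hw : ∀ i, w i ⬝ᵥ w i = 1 := fun i => by
    simpa only [EuclideanSpace.inner_eq_star_dotProduct, star_trivial] using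
      hM.eigenvectorBasis.inner_eq_one i
  have hγM : (γ * M).trace = ∑ i, hM.eigenvalues i * (w i ⬝ᵥ γ *ᵥ w i) := by
    simp only [hM.trace_eq_sum_eigenvectorBasis (γ * M), ← mulVec_mulVec,
      hM.mulVec_eigenvectorBasis, mulVec_smul, dotProduct_smul, smul_eq_mul, w]
  obtain ⟨s, hs, hsum⟩ := exists_card_eq_sum_le_sum_mul hM.eigenvalues (fun i => w i ⬝ᵥ γ *ᵥ w i)
    (fun i => hγ0 (w i)) (fun i => (hγ1 (w i)).trans_eq (hw i))
    (by rw [← hN, hM.trace_eq_sum_eigenvectorBasis γ])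
  rw [hγM, sumSmallest, dif_pos hM]
  exact (csInf_le ((Set.toFinite _).image _).bddBelow ⟨s, hs, rfl⟩).trans hsum

end Variational

section Lattice

variable {d : ℕ}

theorem dist1_comm (x y : Fin d → ℤ) : dist1 x y = dist1 y x := by
  simp only [dist1, ← Int.natAbs_neg (x _ - y _), neg_sub]

theorem dist1_add_right (x z : Fin d → ℤ) : dist1 x (x + z) = ∑ i, (z i).natAbs := by
  simp [dist1]

theorem sum_natAbs_eq_one_iff (z : Fin d → ℤ) :
    ∑ i, (z i).natAbs = 1 ↔ ∃ (j : Fin d) (u : ℤˣ), z = Pi.single j (u : ℤ) := by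
  constructor
  · intro h
    obtain ⟨j, hj⟩ : ∃ j, z j ≠ 0 := by
      by_contra! hz
      simp [hz] at h
    rw [← add_sum_erase _ _ (mem_univ j)] at h
    have hzj : (z j).natAbs = 1 := by have := Int.natAbs_pos.mpr hj; omega
    have hzero : ∑ i ∈ univ.erase j, (z i).natAbs = 0 := by omega
    have hrest : ∀ i ∈ univ.erase j, z i = 0 := fun i hi =>
      Int.natAbs_eq_zero.mp (sum_eq_zero_iff.mp hzero i hi)
    refine ⟨j, Int.isUnit_iff_natAbs_eq.mpr hzj |>.unit, funext fun i => ?_⟩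
    rcases eq_or_ne i j with rfl | hij
    · simp
    · simp [hij, hrest i (mem_erase.mpr ⟨hij, mem_univ i⟩)]
  · rintro ⟨j, u, rfl⟩
    rw [sum_eq_single j (fun i _ hij => by simp [hij]) (by simp)]
    simp

theorem dist1_eq_one_iff (x y : Fin d → ℤ) :
    dist1 x y = 1 ↔ ∃ (j : Fin d) (u : ℤˣ), y = x + Pi.single j (u : ℤ) := by
  rw [← add_sub_cancel x y, dist1_add_right, sum_natAbs_eq_one_iff]
  simp only [add_sub_cancel, sub_eq_iff_eq_add']

noncomputable def bondsFrom (A : Finset (Fin d → ℤ)) : Finset ((Fin d → ℤ) × (Fin d → ℤ)) :=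
  (A ×ˢ (univ : Finset (Fin d × ℤˣ))).image fun p => (p.1, p.1 + Pi.single p.2.1 (p.2.2 : ℤ))

theorem mem_bondsFrom {A : Finset (Fin d → ℤ)} {p : (Fin d → ℤ) × (Fin d → ℤ)} :
    p ∈ bondsFrom A ↔ p.1 ∈ A ∧ dist1 p.1 p.2 = 1 := by
  obtain ⟨x, y⟩ := p
  simp only [bondsFrom, mem_image, mem_product, mem_univ, and_true, Prod.mk.injEq,
    dist1_eq_one_iff, Prod.exists]
  constructor
  · rintro ⟨x, j, u, hx, rfl, rfl⟩
    exact ⟨hx, j, u, rfl⟩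
  · rintro ⟨hx, j, u, rfl⟩
    exact ⟨x, j, u, hx, rfl, rfl⟩

theorem card_bondsFrom (A : Finset (Fin d → ℤ)) : (bondsFrom A).card = 2 * d * A.card := by
  rw [bondsFrom, card_image_of_injective, card_product, card_univ, Fintype.card_prod,
    Fintype.card_fin, Fintype.card_units_int, mul_comm, mul_comm d]
  rintro ⟨x, j, u⟩ ⟨x', j', u'⟩ h
  simp only [Prod.mk.injEq] at h
  obtain ⟨rfl, h⟩ := h
  have hsingle := congrFun (add_left_cancel h) j
  obtain rfl : j = j' := by
    by_contra hjj
    simp [hjj] at hsingle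
  simp_all [Units.ext_iff]

theorem bdry_coe (A : Finset (Fin d → ℤ)) :
    bdry (A : Set (Fin d → ℤ)) = ((bondsFrom A).filter (·.2 ∉ A)).card := by
  rw [bdry, ← Set.ncard_coe_finset]
  congr 1
  ext p
  simp [mem_bondsFrom, and_assoc, and_comm (a := p.2 ∉ A)]

theorem card_filter_mem_bondsFrom_add_bdry (A : Finset (Fin d → ℤ)) :
    ((bondsFrom A).filter (·.2 ∈ A)).card + bdry (A : Set (Fin d → ℤ)) = 2 * d * A.card := by
  rw [bdry_coe, card_filter_add_card_filter_not, card_bondsFrom]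

end Lattice

section Fourier

variable {d : ℕ}

def brillouinZone (d : ℕ) : Set (Fin d → ℝ) := {k | ∀ i, k i ∈ Set.Icc (-π) π}

def fermiSea (d : ℕ) (E : ℝ) : Set (Fin d → ℝ) := {k | (∀ i, k i ∈ Set.Icc (-π) π) ∧ eps d k < E}

theorem brillouinZone_eq_pi : brillouinZone d = Set.univ.pi fun _ => Set.Icc (-π) π := by
  ext k; simp only [brillouinZone, Set.mem_ofPred_eq, Set.mem_pi, Set.mem_univ, true_imp_iff]

theorem isCompact_brillouinZone : IsCompact (brillouinZone d) := by
  rw [brillouinZone_eq_pi]; exact isCompact_univ_pi fun _ => isCompact_Icc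

theorem volume_brillouinZone : volume (brillouinZone d) = ENNReal.ofReal ((2 * π) ^ d) := by
  rw [brillouinZone_eq_pi, volume_pi_pi]
  simp [Real.volume_Icc, two_mul, ENNReal.ofReal_pow (add_pos pi_pos pi_pos).le]

theorem abs_eps_le (k : Fin d → ℝ) : |eps d k| ≤ 2 * d := by
  have : |∑ i, cos (k i)| ≤ d := (abs_sum_le_sum_abs _ _).trans <| by
    simpa using sum_le_sum fun i (_ : i ∈ univ) => abs_cos_le_one (k i)
  rw [eps, abs_mul]; norm_num; linarith

theorem fermiSea_subset_brillouinZone (E : ℝ) : fermiSea d E ⊆ brillouinZone d := fun _ hk => hk.1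

theorem fermiSea_eq_empty {E : ℝ} (hE : E ≤ -(2 * d)) : fermiSea d E = ∅ :=
  Set.eq_empty_of_forall_notMem fun k hk => by
    linarith [hk.2, neg_abs_le (eps d k), abs_eps_le k]

theorem fermiSea_eq_brillouinZone {E : ℝ} (hE : 2 * d < E) : fermiSea d E = brillouinZone d :=
  Set.ext fun k => and_iff_left_of_imp fun _ => by linarith [le_abs_self (eps d k), abs_eps_le k]

theorem Rfun_eq (E : ℝ) : Rfun d E = (volume (fermiSea d E)).toReal / (2 * π) ^ d := rfl

theorem en_eq (E : ℝ) : en d E = (∫ k in fermiSea d E, eps d k) / (2 * π) ^ d := rfl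

def phase (m : Fin d → ℤ) (k : Fin d → ℝ) : ℝ := ∑ i, (m i : ℝ) * k i

theorem phase_sub (m n : Fin d → ℤ) (k : Fin d → ℝ) : phase (m - n) k = phase m k - phase n k := by
  simp [phase, sub_mul]

theorem phase_single (j : Fin d) (a : ℤ) (k : Fin d → ℝ) : phase (Pi.single j a) k = a * k j := by
  rw [phase, sum_eq_single j (fun i _ hij => by simp [hij]) (by simp)]; simp

@[fun_prop]
theorem continuous_phase (m : Fin d → ℤ) : Continuous (phase m) := by
  unfold phase; fun_prop

theorem integral_Icc_exp_int_mul_I (n : ℤ) :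
    ∫ t in Set.Icc (-π) π, Complex.exp (n * t * Complex.I) = if n = 0 then 2 * π else 0 := by
  rw [integral_Icc_eq_integral_Ioc, ← intervalIntegral.integral_of_le (by linarith [pi_pos])]
  split_ifs with hn
  · simp [hn]; ring
  · have hnI : (n : ℂ) * Complex.I ≠ 0 := by simp [hn]
    simp_rw [mul_right_comm _ _ Complex.I]
    rw [integral_exp_mul_complex hnI]
    have : Complex.exp (n * Complex.I * π) = Complex.exp (n * Complex.I * ((-π : ℝ) : ℂ)) :=
      Complex.exp_eq_exp_iff_exists_int.mpr ⟨n, by push_cast; ring⟩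
    rw [this, sub_self, zero_div, Complex.ofReal_zero]

theorem integral_brillouinZone_exp_phase (m : Fin d → ℤ) :
    ∫ k in brillouinZone d, Complex.exp (phase m k * Complex.I) =
      if m = 0 then ((2 * π) ^ d : ℝ) else 0 := by
  have hprod : ∀ k : Fin d → ℝ, Complex.exp (phase m k * Complex.I)
      = ∏ i, Complex.exp (m i * k i * Complex.I) := fun k => by
    simp [phase, ← Complex.exp_sum, sum_mul]
  calc ∫ k in brillouinZone d, Complex.exp (phase m k * Complex.I)
      = ∫ k, ∏ i, Complex.exp (m i * k i * Complex.I)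
          ∂(Measure.pi fun _ => volume.restrict (Set.Icc (-π) π)) := by
        rw [brillouinZone_eq_pi, volume_pi, Measure.restrict_pi_pi]; simp_rw [hprod]
    _ = ∏ i, ∫ t in Set.Icc (-π) π, Complex.exp (m i * t * Complex.I) :=
        integral_fintype_prod_eq_prod (fun i (t : ℝ) => Complex.exp (m i * t * Complex.I))
    _ = _ := by
        simp_rw [integral_Icc_exp_int_mul_I]
        split_ifs with hm
        · simp [hm]
        · obtain ⟨i, hi⟩ := Function.ne_iff.mp hm
          exact prod_eq_zero (mem_univ i) (by simpa using hi)

theorem integrableOn_of_continuous {E : Type*} [NormedAddCommGroup E] {f : (Fin d → ℝ) → E}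
    (hf : Continuous f) {D : Set (Fin d → ℝ)} (hD : D ⊆ brillouinZone d) : IntegrableOn f D :=
  (hf.continuousOn.integrableOn_compact isCompact_brillouinZone).mono_set hD

theorem integral_brillouinZone_cos_phase (m : Fin d → ℤ) :
    ∫ k in brillouinZone d, cos (phase m k) = if m = 0 then (2 * π) ^ d else 0 := by
  have hint : IntegrableOn (fun k => Complex.exp (phase m k * Complex.I)) (brillouinZone d) :=
    integrableOn_of_continuous (by fun_prop) subset_rfl
  simp_rw [← Complex.exp_ofReal_mul_I_re, ← RCLike.re_to_complex, integral_re hint,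
    integral_brillouinZone_exp_phase]
  split_ifs
  · exact_mod_cast Complex.ofReal_re ((2 * π) ^ d)
  · simp

/-- The real part of `(2π)^{-d} ∫_D e^{i m·k} dk`, which is the whole kernel for the sets `D`
symmetric under `k ↦ -k` used here. -/
noncomputable def fourierKernel (D : Set (Fin d → ℝ)) (m : Fin d → ℤ) : ℝ :=
  (∫ k in D, cos (phase m k)) / (2 * π) ^ d

theorem fourierKernel_brillouinZone (m : Fin d → ℤ) :
    fourierKernel (brillouinZone d) m = if m = 0 then 1 else 0 := by
  rw [fourierKernel, integral_brillouinZone_cos_phase]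
  split_ifs <;> simp [two_pi_pos.ne']

theorem fourierKernel_zero (D : Set (Fin d → ℝ)) :
    fourierKernel D 0 = (volume D).toReal / (2 * π) ^ d := by
  simp [fourierKernel, phase, measureReal_def]

variable {ι : Type*} (F : Finset ι) (p : ι → Fin d → ℤ) (v : ι → ℝ)

theorem sum_sum_mul_fourierKernel {D : Set (Fin d → ℝ)} (hD : D ⊆ brillouinZone d) :
    ∑ a ∈ F, ∑ b ∈ F, v a * v b * fourierKernel D (p a - p b) =
      (∫ k in D, ((∑ a ∈ F, v a * cos (phase (p a) k)) ^ 2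
        + (∑ a ∈ F, v a * sin (phase (p a) k)) ^ 2)) / (2 * π) ^ d := by
  have hpt : ∀ k, (∑ a ∈ F, v a * cos (phase (p a) k)) ^ 2
      + (∑ a ∈ F, v a * sin (phase (p a) k)) ^ 2
      = ∑ a ∈ F, ∑ b ∈ F, v a * v b * cos (phase (p a - p b) k) := fun k => by
    simp only [sq, sum_mul_sum, ← sum_add_distrib, phase_sub, cos_sub]
    exact sum_congr rfl fun a _ => sum_congr rfl fun b _ => by ring
  have hint : ∀ m, IntegrableOn (fun k => cos (phase m k)) D := fun m =>
    integrableOn_of_continuous (by fun_prop) hD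
  simp_rw [hpt, fourierKernel, mul_div_assoc', ← sum_div]
  rw [integral_finsetSum _ fun a _ => integrable_finsetSum _ fun b _ => (hint _).const_mul _]
  simp_rw [integral_finsetSum _ fun b _ => (hint _).const_mul _, integral_const_mul]

/-- Bessel's inequality for the plane waves `e^{i p(a)·k}` restricted to `D`. -/
theorem sum_sum_mul_fourierKernel_le {D : Set (Fin d → ℝ)} (hD : D ⊆ brillouinZone d)
    (hp : Set.InjOn p F) :
    ∑ a ∈ F, ∑ b ∈ F, v a * v b * fourierKernel D (p a - p b) ≤ ∑ a ∈ F, v a ^ 2 := by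
  have hbz : ∑ a ∈ F, ∑ b ∈ F, v a * v b * fourierKernel (brillouinZone d) (p a - p b)
      = ∑ a ∈ F, v a ^ 2 := by
    refine sum_congr rfl fun a ha => ?_
    rw [sum_eq_single_of_mem a ha (fun b hb hba => by
      simp [fourierKernel_brillouinZone, sub_eq_zero, (hp.ne_iff hb ha).mpr hba |>.symm])]
    simp [fourierKernel_brillouinZone, sq]
  rw [← hbz, sum_sum_mul_fourierKernel F p v hD,
    sum_sum_mul_fourierKernel F p v subset_rfl]
  gcongr
  · exact .of_forall fun k => by simp only [Pi.zero_apply]; positivity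
  · exact integrableOn_of_continuous (by fun_prop) subset_rfl

theorem sum_sum_mul_fourierKernel_nonneg {D : Set (Fin d → ℝ)} (hD : D ⊆ brillouinZone d) :
    0 ≤ ∑ a ∈ F, ∑ b ∈ F, v a * v b * fourierKernel D (p a - p b) := by
  rw [sum_sum_mul_fourierKernel F p v hD]
  exact div_nonneg (setIntegral_nonneg_of_ae <| .of_forall fun k => by
    simp only [Pi.zero_apply]; positivity) (by positivity)

end Fourier

section TrialDensity

variable {d : ℕ}

theorem hV_isHermitian (Λ : Finset (Fin d → ℤ)) (V : (Fin d → ℤ) → ℝ) : (hV d Λ V).IsHermitian := by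
  ext a b
  simp only [conjTranspose_apply, star_trivial, hV]
  rw [dist1_comm]
  by_cases h : (a : Fin d → ℤ) = b
  · simp [h]
  · simp [h, Ne.symm h]

variable (Λ A : Finset (Fin d → ℤ)) (D : Set (Fin d → ℝ))

noncomputable def trialDensity : Matrix Λ Λ ℝ := fun a b =>
  if (a : Fin d → ℤ) ∈ A ∧ (b : Fin d → ℤ) ∈ A then fourierKernel D (a - b) else 0

theorem dotProduct_trialDensity_mulVec (v : Λ → ℝ) :
    v ⬝ᵥ trialDensity Λ A D *ᵥ v = ∑ a ∈ univ.filter (fun a : Λ => (a : Fin d → ℤ) ∈ A),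
      ∑ b ∈ univ.filter (fun b : Λ => (b : Fin d → ℤ) ∈ A),
        v a * v b * fourierKernel D (a - b) := by
  simp only [dotProduct, mulVec, trialDensity, mul_sum, sum_filter]
  refine sum_congr rfl fun a _ => ?_
  split_ifs with ha
  · refine sum_congr rfl fun b _ => ?_
    simp only [ha, true_and]
    split_ifs <;> ring
  · simp [ha]

variable {D}

theorem dotProduct_trialDensity_mulVec_nonneg (hD : D ⊆ brillouinZone d) (v : Λ → ℝ) :
    0 ≤ v ⬝ᵥ trialDensity Λ A D *ᵥ v := by
  rw [dotProduct_trialDensity_mulVec]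
  exact sum_sum_mul_fourierKernel_nonneg _ _ v hD

theorem dotProduct_trialDensity_mulVec_le (hD : D ⊆ brillouinZone d) (v : Λ → ℝ) :
    v ⬝ᵥ trialDensity Λ A D *ᵥ v ≤ v ⬝ᵥ v := by
  rw [dotProduct_trialDensity_mulVec]
  refine (sum_sum_mul_fourierKernel_le _ _ v hD Subtype.val_injective.injOn).trans ?_
  simp only [dotProduct, ← sq]
  exact sum_le_sum_of_subset_of_nonneg (subset_univ _) fun a _ _ => sq_nonneg _

end TrialDensity

section TrialDensityTrace

variable {d : ℕ} {Λ A : Finset (Fin d → ℤ)} (D : Set (Fin d → ℝ))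

theorem trace_trialDensity (hA : A ⊆ Λ) :
    (trialDensity Λ A D).trace = A.card * fourierKernel D 0 := by
  calc (trialDensity Λ A D).trace = ∑ x ∈ Λ, if x ∈ A then fourierKernel D 0 else 0 := by
        rw [← sum_coe_sort Λ]; simp [trace, trialDensity]
    _ = A.card * fourierKernel D 0 := by
        rw [sum_ite_mem, inter_eq_right.mpr hA, sum_const, nsmul_eq_mul]

theorem trace_trialDensity_mul_hV (hA : A ⊆ Λ) {V : (Fin d → ℤ) → ℝ} (hV0 : ∀ x ∈ A, V x = 0) :
    (trialDensity Λ A D * hV d Λ V).trace =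
      -∑ p ∈ (bondsFrom A).filter (·.2 ∈ A), fourierKernel D (p.1 - p.2) := by
  set S := (bondsFrom A).filter (·.2 ∈ A)
  have hS : S ⊆ Λ ×ˢ Λ := fun p hp => by
    obtain ⟨⟨h1, -⟩, h2⟩ := (mem_filter.trans (and_congr_left' mem_bondsFrom)).mp hp
    exact mem_product.mpr ⟨hA h1, hA h2⟩
  have hentry : ∀ a b : Λ, trialDensity Λ A D a b * hV d Λ V b a =
      if ((a : Fin d → ℤ), (b : Fin d → ℤ)) ∈ S then -fourierKernel D (a - b) else 0 := by
    intro a b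
    simp only [S, trialDensity, hV, mem_filter, mem_bondsFrom]
    rw [dist1_comm (b : Fin d → ℤ)]
    split_ifs <;> simp_all
  calc (trialDensity Λ A D * hV d Λ V).trace
      = ∑ x ∈ Λ, ∑ y ∈ Λ, if (x, y) ∈ S then -fourierKernel D (x - y) else 0 := by
        simp_rw [← sum_coe_sort Λ]; simp only [trace, Matrix.diag_apply, mul_apply, hentry]
    _ = _ := by rw [← sum_product', sum_ite_mem, inter_eq_right.mpr hS, sum_neg_distrib]

end TrialDensityTrace

section Energy

variable {d : ℕ}

theorem integral_fermiSea_cos_eq (E : ℝ) (i j : Fin d) :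
    ∫ k in fermiSea d E, cos (k i) = ∫ k in fermiSea d E, cos (k j) := by
  set T := MeasurableEquiv.arrowCongr' (Equiv.swap i j) (MeasurableEquiv.refl ℝ)
  have hT : MeasurePreserving T := volume_preserving_arrowCongr' _ _ (.id volume)
  have hTk : ∀ k l, T k l = k (Equiv.swap i j l) := fun k l => rfl
  have hpre : T ⁻¹' fermiSea d E = fermiSea d E := by
    ext k
    have hbz : (∀ l, T k l ∈ Set.Icc (-π) π) ↔ ∀ l, k l ∈ Set.Icc (-π) π := by
      simp only [hTk]
      exact (Equiv.swap i j).forall_congr_right (q := fun l => k l ∈ Set.Icc (-π) π)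
    have heps : eps d (T k) = eps d k := by
      simp only [eps, hTk]; rw [Equiv.sum_comp (Equiv.swap i j) (fun l => cos (k l))]
    simp only [fermiSea, Set.mem_preimage, Set.mem_ofPred_eq, hbz, heps]
  calc ∫ k in fermiSea d E, cos (k i) = ∫ k in T ⁻¹' fermiSea d E, cos (T k j) := by
        simp [hpre, hTk]
    _ = ∫ k in fermiSea d E, cos (k j) :=
        hT.setIntegral_preimage_emb T.measurableEmbedding (fun k => cos (k j)) _

theorem integral_eps {D : Set (Fin d → ℝ)} (hD : D ⊆ brillouinZone d) :
    ∫ k in D, eps d k = -2 * ∑ i, ∫ k in D, cos (k i) := by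
  unfold eps
  rw [integral_const_mul,
    integral_finsetSum _ fun i _ => integrableOn_of_continuous (by fun_prop) hD]

theorem integral_fermiSea_eps (E : ℝ) (j : Fin d) :
    ∫ k in fermiSea d E, eps d k = -2 * d * ∫ k in fermiSea d E, cos (k j) := by
  simp_rw [integral_eps (fermiSea_subset_brillouinZone E), integral_fermiSea_cos_eq E _ j,
    sum_const, card_univ, Fintype.card_fin, nsmul_eq_mul, mul_assoc]

theorem fourierKernel_fermiSea_single (E : ℝ) (j : Fin d) (u : ℤˣ) :
    fourierKernel (fermiSea d E) (Pi.single j (u : ℤ)) = -en d E / (2 * d) := by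
  have hcos : ∀ k, cos (phase (Pi.single j (u : ℤ)) k) = cos (k j) := fun k => by
    rcases Int.units_eq_one_or u with rfl | rfl <;> simp [phase_single]
  have hd : (d : ℝ) ≠ 0 := Nat.cast_ne_zero.mpr j.pos.ne'
  simp_rw [fourierKernel, hcos, en_eq, integral_fermiSea_eps E j]
  field_simp

theorem Rfun_of_le {E : ℝ} (hE : E ≤ -(2 * d)) : Rfun d E = 0 := by
  simp [Rfun_eq, fermiSea_eq_empty hE]

theorem en_of_le {E : ℝ} (hE : E ≤ -(2 * d)) : en d E = 0 := by
  simp [en_eq, fermiSea_eq_empty hE]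

theorem Rfun_of_lt {E : ℝ} (hE : 2 * d < E) : Rfun d E = 1 := by
  rw [Rfun_eq, fermiSea_eq_brillouinZone hE, volume_brillouinZone,
    ENNReal.toReal_ofReal (by positivity), div_self (by positivity)]

theorem en_of_lt {E : ℝ} (hE : 2 * d < E) : en d E = 0 := by
  have hcos : ∀ i : Fin d, ∫ k in brillouinZone d, cos (k i) = 0 := fun i => by
    simpa [phase_single] using integral_brillouinZone_cos_phase (Pi.single i 1)
  simp [en_eq, fermiSea_eq_brillouinZone hE, integral_eps subset_rfl, hcos]

end Energy

section UpperBound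

variable {d : ℕ}

theorem SN_le_of_Rfun_mul_card_eq (hd : 1 ≤ d) {Λ A : Finset (Fin d → ℤ)} (hA : A ⊆ Λ)
    {V : (Fin d → ℤ) → ℝ} (hV0 : ∀ x ∈ A, V x = 0) {E : ℝ} {N : ℕ}
    (hN : Rfun d E * A.card = N) :
    SN d Λ V N ≤ en d E * A.card - en d E / (2 * d) * bdry (A : Set (Fin d → ℤ)) := by
  set S := (bondsFrom A).filter (·.2 ∈ A)
  have hD := fermiSea_subset_brillouinZone (d := d) E
  have htr : (trialDensity Λ A (fermiSea d E)).trace = N := by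
    rw [trace_trialDensity _ hA, fourierKernel_zero, ← Rfun_eq, mul_comm, hN]
  have hbond : ∀ p ∈ S, fourierKernel (fermiSea d E) (p.1 - p.2) = -en d E / (2 * d) := by
    intro p hp
    obtain ⟨j, u, hp2⟩ := (dist1_eq_one_iff _ _).mp (mem_bondsFrom.mp (mem_filter.mp hp).1).2
    rw [hp2, sub_add_cancel_left, ← Pi.single_neg, ← Units.val_neg, fourierKernel_fermiSea_single]
  have hcount : (S.card : ℝ) = 2 * d * A.card - bdry (A : Set (Fin d → ℤ)) := by
    rw [eq_sub_iff_add_eq]; exact_mod_cast card_filter_mem_bondsFrom_add_bdry A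
  have hd' : (d : ℝ) ≠ 0 := Nat.cast_ne_zero.mpr (by omega)
  calc SN d Λ V N ≤ (trialDensity Λ A (fermiSea d E) * hV d Λ V).trace :=
        sumSmallest_le_trace_mul (hV_isHermitian Λ V) _
          (dotProduct_trialDensity_mulVec_nonneg Λ A hD)
          (dotProduct_trialDensity_mulVec_le Λ A hD) htr
    _ = S.card * (en d E / (2 * d)) := by
        rw [trace_trialDensity_mul_hV _ hA hV0, sum_congr rfl hbond, sum_const, nsmul_eq_mul]; ring
    _ = en d E * A.card - en d E / (2 * d) * bdry (A : Set (Fin d → ℤ)) := by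
        rw [hcount]; field_simp

theorem exists_Rfun_eq_and_en_eq (εF e : ℝ → ℝ)
    (hεF : ∀ ρ ∈ Set.Ioo (0:ℝ) 1,
      εF ρ ∈ Set.Ioo (-(2*(d:ℝ))) (2*(d:ℝ)) ∧ Rfun d (εF ρ) = ρ)
    (he : ∀ ρ ∈ Set.Ioo (0:ℝ) 1, e ρ = en d (εF ρ))
    (he0 : e 0 = 0) (he1 : e 1 = 0) {ρ : ℝ} (hρ : ρ ∈ Set.Icc (0:ℝ) 1) :
    ∃ E, Rfun d E = ρ ∧ en d E = e ρ := by
  rcases hρ.1.eq_or_lt with rfl | h0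
  · exact ⟨-(2 * d), Rfun_of_le le_rfl, by rw [en_of_le le_rfl, he0]⟩
  rcases hρ.2.eq_or_lt with rfl | h1
  · exact ⟨2 * d + 1, Rfun_of_lt (by linarith), by rw [en_of_lt (by linarith), he1]⟩
  exact ⟨εF ρ, (hεF ρ ⟨h0, h1⟩).2, (he ρ ⟨h0, h1⟩).symm⟩

theorem SN_le_of_le_card (hd : 1 ≤ d) (Λ : Finset (Fin d → ℤ)) (V : (Fin d → ℤ) → ℝ)
    {N : ℕ} (hN : N ≤ (Aset d Λ V).card) (εF e : ℝ → ℝ)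
    (hεF : ∀ ρ ∈ Set.Ioo (0:ℝ) 1,
      εF ρ ∈ Set.Ioo (-(2*(d:ℝ))) (2*(d:ℝ)) ∧ Rfun d (εF ρ) = ρ)
    (he : ∀ ρ ∈ Set.Ioo (0:ℝ) 1, e ρ = en d (εF ρ))
    (he0 : e 0 = 0) (he1 : e 1 = 0) :
    SN d Λ V N ≤ e ((N:ℝ)/((Aset d Λ V).card : ℝ)) * ((Aset d Λ V).card : ℝ)
      - e ((N:ℝ)/((Aset d Λ V).card : ℝ))/(2*(d:ℝ))
          * (bdry (↑(Aset d Λ V) : Set (Fin d → ℤ)) : ℝ) := by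
  set A := Aset d Λ V
  have hρ : (N : ℝ) / A.card ∈ Set.Icc (0:ℝ) 1 :=
    ⟨by positivity, div_le_one_of_le₀ (by exact_mod_cast hN) (by positivity)⟩
  obtain ⟨E, hR, hen⟩ := exists_Rfun_eq_and_en_eq εF e hεF he he0 he1 hρ
  rw [← hen]
  refine SN_le_of_Rfun_mul_card_eq (A := A) hd (filter_subset _ Λ)
    (fun x hx => (mem_filter.mp hx).2) ?_
  rcases (Nat.eq_zero_or_pos A.card) with hA | hA
  · simp [hA, show N = 0 by omega]
  · rw [hR, div_mul_cancel₀ _ (by positivity)]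

end UpperBound

theorem stmt12_general (d : ℕ) (hd : 1 ≤ d) (Λ : Finset (Fin d → ℤ))
    (Vup Vdn : (Fin d → ℤ) → ℝ)
    (Nup Ndn : ℕ)
    (hNup : Nup ≤ (Aset d Λ Vup).card) (hNdn : Ndn ≤ (Aset d Λ Vdn).card)
    (εF e : ℝ → ℝ)
    (hεF : ∀ ρ ∈ Set.Ioo (0:ℝ) 1,
      εF ρ ∈ Set.Ioo (-(2*(d:ℝ))) (2*(d:ℝ)) ∧ Rfun d (εF ρ) = ρ)
    (he : ∀ ρ ∈ Set.Ioo (0:ℝ) 1, e ρ = en d (εF ρ))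
    (he0 : e 0 = 0) (he1 : e 1 = 0) :
    SN d Λ Vup Nup + SN d Λ Vdn Ndn ≤
      (e ((Nup:ℝ)/((Aset d Λ Vup).card : ℝ)) * ((Aset d Λ Vup).card : ℝ)
        - e ((Nup:ℝ)/((Aset d Λ Vup).card : ℝ))/(2*(d:ℝ))
            * (bdry (↑(Aset d Λ Vup) : Set (Fin d → ℤ)) : ℝ))
      + (e ((Ndn:ℝ)/((Aset d Λ Vdn).card : ℝ)) * ((Aset d Λ Vdn).card : ℝ)
        - e ((Ndn:ℝ)/((Aset d Λ Vdn).card : ℝ))/(2*(d:ℝ))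
            * (bdry (↑(Aset d Λ Vdn) : Set (Fin d → ℤ)) : ℝ)) :=
  add_le_add (SN_le_of_le_card hd Λ Vup hNup εF e hεF he he0 he1)
    (SN_le_of_le_card hd Λ Vdn hNdn εF e hεF he he0 he1)

/-- Upper bound of Proposition 1 (non-interacting form): for a magnetic potential
with `A_↑ ∩ A_↓ = ∅` and gap `V₀ > 2d(√d + 1)`,
`S_{N↑}(h_{V↑}) + S_{N↓}(h_{V↓}) ≤ Σ_σ [e(ρ_σ)|A_σ| - (e(ρ_σ)/2d)·B(A_σ)]`. -/
theorem stmt12 (d : ℕ) (hd : 1 ≤ d) (Λ : Finset (Fin d → ℤ))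
    (Vup Vdn : (Fin d → ℤ) → ℝ)
    (hVup : ∀ x ∈ Λ, 0 ≤ Vup x) (hVdn : ∀ x ∈ Λ, 0 ≤ Vdn x)
    (hdisj : Aset d Λ Vup ∩ Aset d Λ Vdn = ∅)
    (hup : (Aset d Λ Vup).Nonempty) (hdn : (Aset d Λ Vdn).Nonempty)
    (V0 : ℝ)
    (hV0low : ∀ x ∈ Λ, (Vup x ≠ 0 → V0 ≤ Vup x) ∧ (Vdn x ≠ 0 → V0 ≤ Vdn x))
    (hV0 : 2*(d:ℝ)*(Real.sqrt d + 1) < V0)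
    (Nup Ndn : ℕ)
    (hNup : Nup ≤ (Aset d Λ Vup).card) (hNdn : Ndn ≤ (Aset d Λ Vdn).card)
    (εF e : ℝ → ℝ)
    (hεF : ∀ ρ ∈ Set.Ioo (0:ℝ) 1,
      εF ρ ∈ Set.Ioo (-(2*(d:ℝ))) (2*(d:ℝ)) ∧ Rfun d (εF ρ) = ρ)
    (he : ∀ ρ ∈ Set.Ioo (0:ℝ) 1, e ρ = en d (εF ρ))
    (he0 : e 0 = 0) (he1 : e 1 = 0) :
    SN d Λ Vup Nup + SN d Λ Vdn Ndn ≤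
      (e ((Nup:ℝ)/((Aset d Λ Vup).card : ℝ)) * ((Aset d Λ Vup).card : ℝ)
        - e ((Nup:ℝ)/((Aset d Λ Vup).card : ℝ))/(2*(d:ℝ))
            * (bdry (↑(Aset d Λ Vup) : Set (Fin d → ℤ)) : ℝ))
      + (e ((Ndn:ℝ)/((Aset d Λ Vdn).card : ℝ)) * ((Aset d Λ Vdn).card : ℝ)
        - e ((Ndn:ℝ)/((Aset d Λ Vdn).card : ℝ))/(2*(d:ℝ))
            * (bdry (↑(Aset d Λ Vdn) : Set (Fin d → ℤ)) : ℝ)) :=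
  stmt12_general d hd Λ Vup Vdn Nup Ndn hNup hNdn εF e hεF he he0 he1
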